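/- arXiv:2405.15289 — 2 statements merged into one kernel-verified Lean document; each statement's English description precedes it below -/
import Mathlib

section
/- Let P_tr and P_te be two probability distributions on a space Z, let H be a set of classifiers Z → Y with Y finite, and for a distribution P define R_P(h, h') = P({z : h(z) ≠ h'(z)}) and, given a ground-truth labeling function y : Z → Y, R_P(h) = P({z : h(z) ≠ y(z)}). Define the H∆H-divergence d(P_tr, P_te) = sup_{h,h' ∈ H} |R_{P_tr}(h,h') − R_{P_te}(h,h')| and the best joint risk λ_H = inf_{h' ∈ H} (R_{P_tr}(h') + R_{P_te}(h')). Then for every h ∈ H: R_{P_te}(h) ≤ R_{P_tr}(h) + d(P_tr, P_te) + λ_H. -/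
/-!
The disagreement mass `P {z | f z ≠ g z}` is a pseudometric on classifiers. For `h, h' ∈ H`, the
triangle inequality under `P_te` through `h'`, then the passage from `P_te` to `P_tr` on the pair
`(h, h')` at cost `d`, then the triangle inequality under `P_tr` through the labeling `y` give
`R_te(h) ≤ R_tr(h) + d + (R_tr(h') + R_te(h'))`; taking the infimum over `h'` gives the bound.
-/

open MeasureTheory

lemma setOf_ne_subset_union {α β : Type*} (f g k : α → β) :
    {x | f x ≠ g x} ⊆ {x | f x ≠ k x} ∪ {x | k x ≠ g x} := by
  intro x hfg
  by_contra hk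
  simp_all

section Disagreement

variable {Z Y : Type*} [MeasurableSpace Z]

lemma measureReal_setOf_ne_le_add (P : Measure Z) [IsFiniteMeasure P] (f g k : Z → Y) :
    P.real {z | f z ≠ g z} ≤ P.real {z | f z ≠ k z} + P.real {z | k z ≠ g z} :=
  (measureReal_mono (setOf_ne_subset_union f g k)).trans (measureReal_union_le _ _)

lemma measureReal_setOf_ne_comm (P : Measure Z) (f g : Z → Y) :
    P.real {z | f z ≠ g z} = P.real {z | g z ≠ f z} := by
  simp_rw [ne_comm]

lemma abs_sub_measureReal_le_one (P Q : Measure Z)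
    [IsZeroOrProbabilityMeasure P] [IsZeroOrProbabilityMeasure Q] (s : Set Z) :
    |P.real s - Q.real s| ≤ 1 :=
  abs_sub_le_of_nonneg_of_le measureReal_nonneg measureReal_le_one
    measureReal_nonneg measureReal_le_one

end Disagreement

theorem stmt9_general {Z Y : Type*} [MeasurableSpace Z]
    (Ptr Pte : Measure Z) [IsProbabilityMeasure Ptr] [IsProbabilityMeasure Pte]
    (H : Set (Z → Y)) (hH : H.Nonempty) (y : Z → Y)
    (Rdis : Measure Z → (Z → Y) → (Z → Y) → ℝ)
    (hRdis : ∀ P h h', Rdis P h h' = (P {z | h z ≠ h' z}).toReal)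
    (R : Measure Z → (Z → Y) → ℝ)
    (hR : ∀ P h, R P h = (P {z | h z ≠ y z}).toReal)
    (d lamH : ℝ)
    (hd : d = ⨆ p : H × H, |Rdis Ptr p.1 p.2 - Rdis Pte p.1 p.2|)
    (hlam : lamH = ⨅ h' : H, (R Ptr h' + R Pte h')) :
    ∀ h ∈ H, R Pte h ≤ R Ptr h + d + lamH := by
  intro h hh
  have : Nonempty H := hH.to_subtype
  have hbdd : BddAbove (Set.range fun p : H × H => |Rdis Ptr p.1 p.2 - Rdis Pte p.1 p.2|) :=
    ⟨1, by rintro _ ⟨p, rfl⟩; simp only [hRdis]; exact abs_sub_measureReal_le_one Ptr Pte _⟩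
  simp only [hRdis, hR, ← measureReal_def] at hd hlam hbdd ⊢
  have hjoint : ∀ h' : H, Pte.real {z | h z ≠ y z} - Ptr.real {z | h z ≠ y z} - d ≤
      Ptr.real {z | (h' : Z → Y) z ≠ y z} + Pte.real {z | (h' : Z → Y) z ≠ y z} := by
    rintro ⟨h', hh'⟩
    have hshift : |Ptr.real {z | h z ≠ h' z} - Pte.real {z | h z ≠ h' z}| ≤ d :=
      hd ▸ le_ciSup hbdd (⟨⟨h, hh⟩, ⟨h', hh'⟩⟩ : H × H)
    have hte := measureReal_setOf_ne_le_add Pte h y h'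
    have htr := measureReal_setOf_ne_le_add Ptr h h' y
    rw [measureReal_setOf_ne_comm Ptr y h'] at htr
    linarith [(abs_le.mp hshift).1]
  linarith [hlam ▸ le_ciInf hjoint]

/-- Ben-David-style domain adaptation bound: the test risk of any hypothesis in `H`
is bounded by its training risk plus the `H∆H`-divergence plus the best joint risk. -/
theorem stmt9 {Z Y : Type*} [MeasurableSpace Z] [Finite Y]
    (Ptr Pte : Measure Z) [IsProbabilityMeasure Ptr] [IsProbabilityMeasure Pte]
    (H : Set (Z → Y)) (hH : H.Nonempty) (y : Z → Y)
    (Rdis : Measure Z → (Z → Y) → (Z → Y) → ℝ)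
    (hRdis : ∀ P h h', Rdis P h h' = (P {z | h z ≠ h' z}).toReal)
    (R : Measure Z → (Z → Y) → ℝ)
    (hR : ∀ P h, R P h = (P {z | h z ≠ y z}).toReal)
    (d lamH : ℝ)
    (hd : d = ⨆ p : H × H, |Rdis Ptr p.1 p.2 - Rdis Pte p.1 p.2|)
    (hlam : lamH = ⨅ h' : H, (R Ptr h' + R Pte h')) :
    ∀ h ∈ H, R Pte h ≤ R Ptr h + d + lamH :=
  stmt9_general Ptr Pte H hH y Rdis hRdis R hR d lamH hd hlam
end

section
/- Let x₁,…,x_N ∈ X, let A ∈ ℝ^{D×D} be invertible with A_inv the top D_inv rows of A⁻¹, and let f_I(x) = A g⁻¹(x) where each g⁻¹(x_i) = (z†, v_i) for a fixed z† ∈ ℝ^{D_inv} and arbitrary v_i ∈ ℝ^{D−D_inv}. Then the matrix B ∈ ℝ^{D_inv × D} defined by B = A_inv satisfies B (f_I(x_i) − f_I(x_j)) = 0 for all i, j; moreover any matrix B' ∈ ℝ^{D_inv × D} whose rows span the orthogonal complement of span{f_I(x_i) − f_I(x_j) : i,j}, when span{v_i − v_j} = ℝ^{D−D_inv}, has row space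 equal to the row space of A_inv. -/
open Matrix

def dotLin {n : ℕ} (d : Fin n → ℝ) : (Fin n → ℝ) →ₗ[ℝ] ℝ where
  toFun w := w ⬝ᵥ d
  map_add' w w' := by simp [add_dotProduct]
  map_smul' c w := by simp [smul_dotProduct]

/-!
A covector `w` annihilates every difference `f_I(x_i) - f_I(x_j) = A (0, v_i - v_j)` iff
`(w A) ⬝ (0, v_i - v_j) = 0` for all `i, j`; since the `v_i - v_j` span, this says exactly that the
last `D - D_inv` coordinates of `w A` vanish, i.e. that `w = (w A) A⁻¹` is a combination of the
first `D_inv` rows of `A⁻¹`, which are the rows of `A_inv`.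
-/

theorem Fin.append_sub_append {α : Type*} [AddGroup α] {m n : ℕ} (a : Fin m → α)
    (b c : Fin n → α) :
    Fin.append a b - Fin.append a c = Fin.append 0 (b - c) := by
  ext i
  refine Fin.addCases (fun k => ?_) (fun k => ?_) i <;> simp

theorem Fin.exists_eq_append_zero_iff {α : Type*} [Zero α] {m n : ℕ} (u : Fin (m + n) → α) :
    (∃ c : Fin m → α, u = Fin.append c 0) ↔ u ∘ Fin.natAdd m = 0 := by
  refine ⟨?_, fun h => ⟨u ∘ Fin.castAdd n, ?_⟩⟩
  · rintro ⟨c, rfl⟩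
    ext k
    simp
  · rw [← h]
    exact Fin.append_castAdd_natAdd.symm

namespace Matrix

section Semiring

variable {R : Type*} [Semiring R] {m n : ℕ}

theorem dotProduct_zero_append (u : Fin (m + n) → R) (d : Fin n → R) :
    u ⬝ᵥ Fin.append 0 d = (u ∘ Fin.natAdd m) ⬝ᵥ d := by
  simp [dotProduct, Fin.sum_univ_add]

theorem append_zero_vecMul {o : Type*} (c : Fin m → R) (M : Matrix (Fin (m + n)) o R) :
    Fin.append c 0 ᵥ* M = ∑ k, c k • M (Fin.castAdd n k) := by
  simp [vecMul_eq_sum, Fin.sum_univ_add]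

end Semiring

variable {R : Type*} [CommRing R] {m n : ℕ}

theorem eq_zero_of_dotProduct_eq_zero_of_span_eq_top {ι : Type*} [Fintype ι]
    {S : Set (ι → R)} (hS : Submodule.span R S = ⊤) {u : ι → R} (hu : ∀ d ∈ S, u ⬝ᵥ d = 0) :
    u = 0 := by
  have h : dotProductBilin R R u = 0 := LinearMap.ext_on hS hu
  exact dotProduct_eq_zero u fun w => LinearMap.congr_fun h w

theorem mem_span_inv_castAdd_iff {A : Matrix (Fin (m + n)) (Fin (m + n)) R}
    (hA : IsUnit A) (w : Fin (m + n) → R) :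
    w ∈ Submodule.span R (Set.range fun k => A⁻¹ (Fin.castAdd n k)) ↔
      (w ᵥ* A) ∘ Fin.natAdd m = 0 := by
  have hdet := (isUnit_iff_isUnit_det A).mp hA
  have hinv : ∀ u, u ᵥ* A⁻¹ = w ↔ w ᵥ* A = u := fun u => by
    constructor
    · rintro rfl
      rw [vecMul_vecMul, nonsing_inv_mul A hdet, vecMul_one]
    · rintro rfl
      rw [vecMul_vecMul, mul_nonsing_inv A hdet, vecMul_one]
  simp_rw [Submodule.mem_span_range_iff_exists_fun, ← append_zero_vecMul, hinv,
    ← Fin.exists_eq_append_zero_iff]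

theorem mem_span_inv_castAdd_iff_of_span_eq_top {A : Matrix (Fin (m + n)) (Fin (m + n)) R}
    (hA : IsUnit A) {S : Set (Fin n → R)} (hS : Submodule.span R S = ⊤) (w : Fin (m + n) → R) :
    w ∈ Submodule.span R (Set.range fun k => A⁻¹ (Fin.castAdd n k)) ↔
      ∀ d ∈ S, w ⬝ᵥ A *ᵥ Fin.append 0 d = 0 := by
  simp_rw [mem_span_inv_castAdd_iff hA, dotProduct_mulVec, dotProduct_zero_append]
  exact ⟨fun h d _ => by rw [h, zero_dotProduct],
    eq_zero_of_dotProduct_eq_zero_of_span_eq_top hS⟩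

end Matrix

/-- Extension of Theorem 5.4: the invariant projection `A_inv` annihilates all
differences of interventional embeddings, and if the variant parts span all
directions, any matrix whose rows span the orthogonal complement of those
differences has the same row space as `A_inv`. -/
theorem stmt19 {Dinv Dvar N : ℕ} {X : Type*}
    (A : Matrix (Fin (Dinv + Dvar)) (Fin (Dinv + Dvar)) ℝ) (hA : IsUnit A)
    (Ainv : Matrix (Fin Dinv) (Fin (Dinv + Dvar)) ℝ)
    (hAinv : ∀ i j, Ainv i j = A⁻¹ (Fin.castAdd Dvar i) j)
    (ginv : X → (Fin (Dinv + Dvar) → ℝ))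
    (fI : X → (Fin (Dinv + Dvar) → ℝ)) (hfI : ∀ x, fI x = A.mulVec (ginv x))
    (x : Fin N → X) (zdag : Fin Dinv → ℝ) (v : Fin N → (Fin Dvar → ℝ))
    (hlat : ∀ i, ginv (x i) = Fin.append zdag (v i)) :
    (∀ i j, Ainv.mulVec (fI (x i) - fI (x j)) = 0) ∧
    (∀ B' : Matrix (Fin Dinv) (Fin (Dinv + Dvar)) ℝ,
      Submodule.span ℝ (Set.range fun k => B' k)
          = ⨅ (i : Fin N) (j : Fin N), LinearMap.ker (dotLin (fI (x i) - fI (x j))) →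
      Submodule.span ℝ {w : Fin Dvar → ℝ | ∃ i j, w = v i - v j} = ⊤ →
      Submodule.span ℝ (Set.range fun k => B' k)
          = Submodule.span ℝ (Set.range fun k => Ainv k)) := by
  have hrows : (fun k => Ainv k) = fun k => A⁻¹ (Fin.castAdd Dvar k) :=
    funext fun k => funext (hAinv k)
  have hdiff : ∀ i j, fI (x i) - fI (x j) = A *ᵥ Fin.append 0 (v i - v j) := fun i j => by
    rw [hfI, hfI, ← mulVec_sub, hlat, hlat, Fin.append_sub_append]
  refine ⟨fun i j => ?_, fun B' hB' hspan => ?_⟩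
  · ext k
    have hk : Ainv k ∈ Submodule.span ℝ (Set.range fun k => Ainv k) :=
      Submodule.subset_span ⟨k, rfl⟩
    rw [hrows, mem_span_inv_castAdd_iff_of_span_eq_top hA Submodule.span_univ] at hk
    simpa [mulVec, hdiff] using hk _ trivial
  · ext w
    simp only [hB', hrows, mem_span_inv_castAdd_iff_of_span_eq_top hA hspan, Submodule.mem_iInf,
      LinearMap.mem_ker, dotLin, LinearMap.coe_mk, AddHom.coe_mk, hdiff]
    exact ⟨fun h d ⟨i, j, hd⟩ => hd ▸ h i j, fun h i j => h _ ⟨i, j, rfl⟩⟩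
end
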